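/- arXiv:1301.1574 — 3 statements merged into one kernel-verified Lean document; each statement's English description precedes it below -/
import Mathlib

section
/- For every square-free integer N > 1, any parabolic element of the group Γ₀(N)⁺ fixes a point that is Γ₀(N)⁺-equivalent to i∞; in particular, if v divides N and w = N/v, then there exist integers a, b with -a·w - b·v = 1, and the matrix (1/√w)·[[a·w, b],[N, -w]] belongs to Γ₀(N)⁺ and maps the cusp 1/v to i∞. -/
/-- Membership in the moonshine group `Γ₀(N)⁺`, viewed as a set of real 2×2 matrices. -/
def Gamma0Plus (N : ℕ) : Set (Matrix (Fin 2) (Fin 2) ℝ) :=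
  {M | ∃ a b c d e : ℤ, 0 < e ∧ a * d - b * c = e ∧ e ∣ (N : ℤ) ∧ e ∣ a ∧ e ∣ d ∧
    (N : ℤ) ∣ c ∧ M = (Real.sqrt e)⁻¹ • !![(a : ℝ), (b : ℝ); (c : ℝ), (d : ℝ)]}

/-! The Atkin–Lehner-type matrix `[[a w, b], [N, -w]]` has determinant `w (-a w - b v) = w`,
and for square-free `N = v w` the Bézout relation `-a w - b v = 1` is solvable because
`v` and `w` are coprime. Its bottom row `(N, -w)` vanishes at `1/v`, so it sends `1/v` to `i∞`. -/

theorem Nat.coprime_div_of_squarefree {N v : ℕ} (hN : Squarefree N) (hv : v ∣ N) :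
    Nat.Coprime v (N / v) :=
  Nat.coprime_of_squarefree_mul (by rwa [Nat.mul_div_cancel' hv])

theorem Nat.Coprime.exists_neg_mul_sub_mul_eq_one {v w : ℕ} (h : Nat.Coprime v w) :
    ∃ a b : ℤ, -a * w - b * v = 1 := by
  obtain ⟨x, y, hxy⟩ := Nat.isCoprime_iff_coprime.mpr h.symm
  exact ⟨-x, -y, by linarith⟩

theorem smul_mem_Gamma0Plus {N : ℕ} {a b c d e : ℤ} (he : 0 < e) (hdet : a * d - b * c = e)
    (heN : e ∣ (N : ℤ)) (hea : e ∣ a) (hed : e ∣ d) (hc : (N : ℤ) ∣ c) :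
    (Real.sqrt e)⁻¹ • !![(a : ℝ), (b : ℝ); (c : ℝ), (d : ℝ)] ∈ Gamma0Plus N :=
  ⟨a, b, c, d, e, he, hdet, heN, hea, hed, hc, rfl⟩

theorem atkinLehner_mem_Gamma0Plus {N v w : ℕ} (hvw : v * w = N) (hw : 0 < w) {a b : ℤ}
    (hab : -a * w - b * v = 1) :
    (Real.sqrt w)⁻¹ • !![(a * w : ℝ), (b : ℝ); (N : ℝ), -(w : ℝ)] ∈ Gamma0Plus N := by
  have hN : (N : ℤ) = v * w := by exact_mod_cast hvw.symm
  have hdet : a * w * -(w : ℤ) - b * N = w := by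
    rw [hN]; linear_combination (w : ℤ) * hab
  have h := smul_mem_Gamma0Plus (N := N) (Int.natCast_pos.mpr hw) hdet ⟨v, by rw [hN]; ring⟩
    (dvd_mul_left _ _) (dvd_neg.mpr dvd_rfl) dvd_rfl
  simpa using h

theorem cusp_one_div_v_equivalent_infinity_general (N : ℕ) (hN : Squarefree N)
    (v : ℕ) (hv : v ∣ N) :
    ∃ a b : ℤ, -a * (N / v : ℕ) - b * v = 1 ∧
      (Real.sqrt (N / v : ℕ))⁻¹ •
          !![(a * (N / v : ℕ) : ℝ), (b : ℝ); (N : ℝ), -((N / v : ℕ) : ℝ)] ∈ Gamma0Plus N ∧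
      (N : ℝ) * (1 / v) + -((N / v : ℕ) : ℝ) = 0 := by
  have hvw : v * (N / v) = N := Nat.mul_div_cancel' hv
  have hN0 : N ≠ 0 := hN.ne_zero
  have hv0 : v ≠ 0 := fun h => hN0 (by rw [← hvw, h, zero_mul])
  have hw : 0 < N / v := Nat.pos_of_ne_zero fun h => hN0 (by rw [← hvw, h, mul_zero])
  obtain ⟨a, b, hab⟩ := (Nat.coprime_div_of_squarefree hN hv).exists_neg_mul_sub_mul_eq_one
  refine ⟨a, b, hab, atkinLehner_mem_Gamma0Plus hvw hw hab, ?_⟩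
  have hNR : (N : ℝ) = v * (N / v : ℕ) := by exact_mod_cast hvw.symm
  rw [hNR]
  field_simp
  ring

/-- For square-free `N > 1` and `v ∣ N` with `w = N/v`, there exist integers `a, b` with
`-a·w - b·v = 1` such that `(1/√w)·[[a·w, b],[N, -w]] ∈ Γ₀(N)⁺` and this matrix maps the
cusp `1/v` to `i∞` (its bottom row annihilates `1/v`). -/
theorem cusp_one_div_v_equivalent_infinity (N : ℕ) (hN : Squarefree N) (hN1 : 1 < N)
    (v : ℕ) (hv : v ∣ N) (hvpos : 0 < v) :
    ∃ a b : ℤ, -a * (N / v : ℕ) - b * v = 1 ∧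
      (Real.sqrt (N / v : ℕ))⁻¹ •
          !![(a * (N / v : ℕ) : ℝ), (b : ℝ); (N : ℝ), -((N / v : ℕ) : ℝ)] ∈ Gamma0Plus N ∧
      (N : ℝ) * (1 / v) + -((N / v : ℕ) : ℝ) = 0 :=
  cusp_one_div_v_equivalent_infinity_general N hN v hv
end

section
/- For a square-free positive integer N = p₁⋯p_r (distinct primes p_j) and complex s with Re(s) > 1, the Dirichlet series H_N(s) = ∑_{v | N} ∑_{n ≥ 1, gcd(n,v)=1} φ((N/v)·n) / ((N/v)·√v·n)^{2s} satisfies H_N(s) = (ζ(2s−1)/ζ(2s)) · N^{−s} · ∏_{j=1}^{r} (p_j^s + p_j)/(p_j^s + 1). -/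
/-!
Writing `d = N / v`, the terms of `H_N(s)` are indexed by `m = d n` with `gcd(m, N) = d`, and each
`m ≥ 1` arises from exactly one divisor `v`. Since `(d √v n)^{2s} = m^{2s} N^s / gcd(m, N)^s`, this
gives `H_N(s) = N^{-s} ∑ φ(m) gcd(m, N)^s m^{-2s}`. The new summand is multiplicative, and as `N` is
square-free, `gcd(p^e, N) = gcd(p, N)` for `e ≥ 1`, so its Euler factor at `p` is a geometric
series. It equals `(1 - p^{-2s}) / (1 - p^{1-2s})`, the Euler factor of `ζ(2s - 1) / ζ(2s)`,
multiplied by `(p^s + p) / (p^s + 1)` when `p ∣ N`.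
-/

open Complex Finset

lemma Nat.Prime.gcd_pow_eq_gcd_of_squarefree {p N e : ℕ} (hp : p.Prime) (hN : Squarefree N)
    (he : e ≠ 0) : (p ^ e).gcd N = p.gcd N := by
  by_cases hpN : p ∣ N
  · obtain ⟨M, rfl⟩ := hpN
    have hpM : p.Coprime M := Nat.coprime_of_squarefree_mul hN
    rw [Nat.Coprime.gcd_mul _ hpM, Nat.Coprime.gcd_mul _ hpM, (hpM.pow_left e).gcd_eq_one,
      hpM.gcd_eq_one, Nat.gcd_self, Nat.gcd_eq_right (dvd_pow_self p he)]
  · have hpN : p.Coprime N := (Nat.Prime.coprime_iff_not_dvd hp).mpr hpN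
    rw [(hpN.pow_left e).gcd_eq_one, hpN.gcd_eq_one]

lemma hasSum_totient_prime_pow_succ_mul_pow {p : ℕ} (hp : p.Prime) {x : ℂ}
    (hx : ‖(p : ℂ) * x‖ < 1) :
    HasSum (fun e ↦ ((p ^ (e + 1)).totient : ℂ) * x ^ (e + 1)) ((p - 1) * x / (1 - p * x)) := by
  have hterm : ∀ e : ℕ, ((p ^ (e + 1)).totient : ℂ) * x ^ (e + 1) = (p - 1) * x * (p * x) ^ e := by
    intro e
    rw [Nat.totient_prime_pow_succ hp, Nat.cast_mul, Nat.cast_sub hp.one_le]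
    push_cast
    ring
  simpa only [hterm, div_eq_mul_inv] using (hasSum_geometric_of_norm_lt_one hx).mul_left _

lemma hasProd_primes_ite_dvd {α : Type*} [CommMonoid α] [TopologicalSpace α] {N : ℕ}
    (hN : N ≠ 0) (g : ℕ → α) :
    HasProd (fun p : Nat.Primes ↦ if (p : ℕ) ∣ N then g p else 1) (∏ p ∈ N.primeFactors, g p) := by
  have hsupp : ∀ p ∉ N.primeFactors.subtype Nat.Prime, (if (p : ℕ) ∣ N then g p else 1) = 1 :=
    fun p hp ↦ if_neg fun hpN ↦ hp (mem_subtype.mpr (Nat.mem_primeFactors.mpr ⟨p.prop, hpN, hN⟩))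
  have hprod : ∏ p ∈ N.primeFactors.subtype Nat.Prime, (if (p : ℕ) ∣ N then g p else 1)
      = ∏ p ∈ N.primeFactors, g p := by
    rw [prod_subtype_eq_prod_filter (f := fun p ↦ if p ∣ N then g p else 1),
      filter_true_of_mem fun p hp ↦ Nat.prime_of_mem_primeFactors hp]
    exact prod_congr rfl fun p hp ↦ if_pos (Nat.dvd_of_mem_primeFactors hp)
  exact hprod ▸ hasProd_prod_of_ne_finset_one hsupp

lemma sum_divisors_tsum_ite_gcd_eq {E : Type*} [NormedAddCommGroup E] [CompleteSpace E]
    {N : ℕ} (hN : N ≠ 0) {g : ℕ → E} (hg : Summable g) :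
    ∑ v ∈ N.divisors, ∑' m, (if m.gcd N = N / v then g m else 0) = ∑' m, g m := by
  have hsum : ∀ v ∈ N.divisors, Summable fun m ↦ if m.gcd N = N / v then g m else 0 :=
    fun v _ ↦ (hg.indicator {m | m.gcd N = N / v}).congr fun m ↦ by simp [Set.indicator_apply]
  rw [← Summable.tsum_finsetSum hsum]
  refine tsum_congr fun m ↦ ?_
  have hgcd : m.gcd N ∣ N := Nat.gcd_dvd_right m N
  rw [sum_eq_single_of_mem (N / m.gcd N) (Nat.mem_divisors.mpr ⟨Nat.div_dvd_of_dvd hgcd, hN⟩),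
    if_pos (Nat.div_div_self hgcd hN).symm]
  intro v hv hne
  refine if_neg fun h ↦ hne ?_
  rw [h, Nat.div_div_self (Nat.dvd_of_mem_divisors hv) hN]

lemma norm_natCast_cpow_lt_one {n : ℕ} (hn : 1 < n) {z : ℂ} (hz : z.re < 0) :
    ‖(n : ℂ) ^ z‖ < 1 := by
  rw [norm_natCast_cpow_of_pos (by omega)]
  exact Real.rpow_lt_one_of_one_lt_of_neg (by exact_mod_cast hn) hz

lemma cpow_neg_two_mul_sub_one {z : ℂ} (hz : z ≠ 0) (s : ℂ) :
    z ^ (-(2 * s - 1)) = z * z ^ (-(2 * s)) := by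
  rw [neg_sub, sub_eq_add_neg, cpow_add _ _ hz, cpow_one]

lemma ofReal_sqrt_natCast_cpow_two_mul (v : ℕ) (s : ℂ) :
    (Real.sqrt v : ℂ) ^ (2 * s) = (v : ℂ) ^ s := by
  have harg : (Real.sqrt v : ℂ).arg = 0 := arg_ofReal_of_nonneg (Real.sqrt_nonneg _)
  rw [cpow_ofNat_mul' (by simp [harg, Real.pi_pos]) (by simp [harg, Real.pi_pos.le]), ← ofReal_pow,
    Real.sq_sqrt (Nat.cast_nonneg _), ofReal_natCast]

lemma natCast_mul_sqrt_mul_natCast_cpow_two_mul (d v n : ℕ) (s : ℂ) :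
    ((d : ℂ) * (Real.sqrt v : ℂ) * n) ^ (2 * s)
      = (d : ℂ) ^ (2 * s) * (v : ℂ) ^ s * (n : ℂ) ^ (2 * s) := by
  rw [← ofReal_natCast d, ← ofReal_natCast n, ← ofReal_mul,
    mul_cpow_ofReal_nonneg (by positivity) (by positivity), ofReal_mul,
    mul_cpow_ofReal_nonneg (by positivity) (by positivity), ofReal_sqrt_natCast_cpow_two_mul]

noncomputable def totientGcdSummand (N : ℕ) (s : ℂ) (m : ℕ) : ℂ :=
  (m.totient : ℂ) * (m.gcd N : ℂ) ^ s * (m : ℂ) ^ (-(2 * s))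

section TotientGcdSummand

variable {N : ℕ} {s : ℂ}

@[simp]
lemma totientGcdSummand_zero : totientGcdSummand N s 0 = 0 := by simp [totientGcdSummand]

@[simp]
lemma totientGcdSummand_one : totientGcdSummand N s 1 = 1 := by simp [totientGcdSummand]

lemma totientGcdSummand_mul {m n : ℕ} (h : m.Coprime n) :
    totientGcdSummand N s (m * n) = totientGcdSummand N s m * totientGcdSummand N s n := by
  simp only [totientGcdSummand, Nat.totient_mul h, Nat.gcd_comm _ N, Nat.Coprime.gcd_mul N h,
    Nat.cast_mul, natCast_mul_natCast_cpow]
  ring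

lemma summable_norm_totientGcdSummand (hN : N ≠ 0) (hs : 1 < s.re) :
    Summable fun m ↦ ‖totientGcdSummand N s m‖ := by
  have hmajorant : Summable fun m : ℕ ↦ (N : ℝ) ^ s.re * (m : ℝ) ^ (1 - 2 * s.re) :=
    (Real.summable_nat_rpow.mpr (by linarith)).mul_left _
  refine hmajorant.of_nonneg_of_le (fun _ ↦ norm_nonneg _) fun m ↦ ?_
  rcases Nat.eq_zero_or_pos m with rfl | hm
  · simp only [totientGcdSummand_zero, norm_zero]
    positivity
  have hφ : ‖(m.totient : ℂ)‖ ≤ m := by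
    rw [norm_natCast]
    exact_mod_cast Nat.totient_le m
  have hgcd : ‖(m.gcd N : ℂ) ^ s‖ ≤ (N : ℝ) ^ s.re := by
    rw [norm_natCast_cpow_of_pos (Nat.gcd_pos_of_pos_left N hm)]
    gcongr
    exact Nat.gcd_le_right m (Nat.pos_of_ne_zero hN)
  calc ‖totientGcdSummand N s m‖
      = ‖(m.totient : ℂ)‖ * ‖(m.gcd N : ℂ) ^ s‖ * (m : ℝ) ^ (-(2 * s.re)) := by
        simp [totientGcdSummand, norm_natCast_cpow_of_pos hm]
    _ ≤ m * (N : ℝ) ^ s.re * (m : ℝ) ^ (-(2 * s.re)) := by gcongr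
    _ = (N : ℝ) ^ s.re * (m : ℝ) ^ (1 - 2 * s.re) := by
        rw [sub_eq_add_neg, Real.rpow_add (by exact_mod_cast hm), Real.rpow_one]
        ring

lemma totient_div_cpow_eq_totientGcdSummand {d v n : ℕ} (hdv : d * v = N) (hN : N ≠ 0)
    (hn : n ≠ 0) (hnv : n.gcd v = 1) :
    ((d * n).totient : ℂ) / ((d : ℂ) * (Real.sqrt v : ℂ) * n) ^ (2 * s)
      = totientGcdSummand N s (d * n) * (N : ℂ) ^ (-s) := by
  have hd : (d : ℂ) ^ s ≠ 0 := by simp [cpow_eq_zero_iff, left_ne_zero_of_mul (hdv ▸ hN)]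
  have hv : (v : ℂ) ^ s ≠ 0 := by simp [cpow_eq_zero_iff, right_ne_zero_of_mul (hdv ▸ hN)]
  have hn' : (n : ℂ) ^ (2 * s) ≠ 0 := by simp [cpow_eq_zero_iff, hn]
  have hgcd : (d * n).gcd N = d := by rw [← hdv, Nat.gcd_mul_left, hnv, mul_one]
  rw [totientGcdSummand, hgcd, natCast_mul_sqrt_mul_natCast_cpow_two_mul, ← hdv, Nat.cast_mul,
    Nat.cast_mul, cpow_neg, cpow_neg, natCast_mul_natCast_cpow, natCast_mul_natCast_cpow,
    cpow_ofNat_mul (d : ℂ)]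
  field_simp

lemma tsum_coprime_eq_tsum_gcd_eq {d v : ℕ} (hdv : d * v = N) (hN : N ≠ 0) :
    ∑' n : ℕ, (if n ≠ 0 ∧ n.gcd v = 1 then
        ((d * n).totient : ℂ) / ((d : ℂ) * (Real.sqrt v : ℂ) * n) ^ (2 * s) else 0)
      = ∑' m : ℕ, if m.gcd N = d then totientGcdSummand N s m * (N : ℂ) ^ (-s) else 0 := by
  have hd : d ≠ 0 := left_ne_zero_of_mul (hdv ▸ hN)
  have hsupp : Function.support (fun m : ℕ ↦
      if m.gcd N = d then totientGcdSummand N s m * (N : ℂ) ^ (-s) else 0) ⊆ Set.range (d * ·) := by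
    intro m hm
    have hmN : m.gcd N = d := by_contra fun h ↦ hm (if_neg h)
    obtain ⟨k, hk⟩ := hmN ▸ Nat.gcd_dvd_left m N
    exact ⟨k, hk.symm⟩
  rw [← (mul_right_injective₀ hd).tsum_eq hsupp]
  refine tsum_congr fun n ↦ ?_
  rcases eq_or_ne n 0 with rfl | hn
  · simp
  have hgcd : (d * n).gcd N = d ↔ n.gcd v = 1 := by
    rw [← hdv, Nat.gcd_mul_left, mul_eq_left₀ hd]
  simp only [hgcd, ne_eq, hn, not_false_eq_true, true_and]
  split_ifs with hnv
  · exact totient_div_cpow_eq_totientGcdSummand hdv hN hn hnv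
  · rfl

lemma tsum_totientGcdSummand_prime_pow (hN : Squarefree N) {p : ℕ} (hp : p.Prime)
    (hs : 1 < s.re) :
    ∑' e, totientGcdSummand N s (p ^ e)
      = 1 + (p.gcd N : ℂ) ^ s
          * ((p - 1) * (p : ℂ) ^ (-(2 * s)) / (1 - p * (p : ℂ) ^ (-(2 * s)))) := by
  set x := (p : ℂ) ^ (-(2 * s))
  have hpx : ‖(p : ℂ) * x‖ < 1 := by
    rw [← cpow_neg_two_mul_sub_one (by exact_mod_cast hp.ne_zero)]
    exact norm_natCast_cpow_lt_one hp.one_lt (by simp; linarith)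
  have hterm : ∀ e : ℕ, totientGcdSummand N s (p ^ (e + 1))
      = (p.gcd N : ℂ) ^ s * (((p ^ (e + 1)).totient : ℂ) * x ^ (e + 1)) := by
    intro e
    rw [totientGcdSummand, hp.gcd_pow_eq_gcd_of_squarefree hN e.succ_ne_zero, Nat.cast_pow,
      ← natCast_cpow_natCast_mul, cpow_nat_mul]
    ring
  have hsum : HasSum (fun e ↦ totientGcdSummand N s (p ^ (e + 1)))
      ((p.gcd N : ℂ) ^ s * ((p - 1) * x / (1 - p * x))) := by
    simpa only [hterm] using (hasSum_totient_prime_pow_succ_mul_pow hp hpx).mul_left _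
  rw [tsum_eq_zero_add' (f := fun e ↦ totientGcdSummand N s (p ^ e)) hsum.summable, hsum.tsum_eq,
    pow_zero, totientGcdSummand_one]

lemma tsum_totientGcdSummand_prime_pow_eq (hN : Squarefree N) {p : ℕ} (hp : p.Prime)
    (hs : 1 < s.re) :
    ∑' e, totientGcdSummand N s (p ^ e)
      = (if p ∣ N then ((p : ℂ) ^ s + p) / ((p : ℂ) ^ s + 1) else 1)
        * (1 - (p : ℂ) ^ (-(2 * s - 1)))⁻¹ * (1 - (p : ℂ) ^ (-(2 * s))) := by
  have hp0 : (p : ℂ) ≠ 0 := by exact_mod_cast hp.ne_zero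
  have h1px : 1 - (p : ℂ) ^ (-(2 * s - 1)) ≠ 0 := by
    have hlt := norm_natCast_cpow_lt_one hp.one_lt (z := -(2 * s - 1)) (by simp; linarith)
    refine sub_ne_zero.mpr fun h ↦ ?_
    rw [← h, norm_one] at hlt
    exact lt_irrefl _ hlt
  have ha : (p : ℂ) ^ s ≠ 0 := by simp [cpow_eq_zero_iff, hp0]
  have ha1 : (p : ℂ) ^ s + 1 ≠ 0 := by
    rw [← sub_neg_eq_add, sub_ne_zero]
    refine fun h ↦ (Real.one_lt_rpow (x := p) (by exact_mod_cast hp.one_lt)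
      (by linarith : 0 < s.re)).ne' ?_
    rw [← norm_natCast_cpow_of_pos hp.pos, h, norm_neg, norm_one]
  have hx : (p : ℂ) ^ (-(2 * s)) = (((p : ℂ) ^ s) ^ 2)⁻¹ := by rw [cpow_neg, cpow_ofNat_mul]
  rw [tsum_totientGcdSummand_prime_pow hN hp hs]
  rw [cpow_neg_two_mul_sub_one hp0, hx] at h1px ⊢
  have hap : ((p : ℂ) ^ s) ^ 2 - p ≠ 0 := fun h ↦ h1px (by
    rw [sub_eq_zero.mp h, mul_inv_cancel₀ hp0, sub_self])
  split_ifs with hpN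
  · rw [Nat.gcd_eq_left hpN]
    field_simp
    ring
  · rw [((Nat.Prime.coprime_iff_not_dvd hp).mpr hpN).gcd_eq_one, Nat.cast_one, one_cpow]
    field_simp
    ring

lemma tsum_totientGcdSummand (hN : Squarefree N) (hs : 1 < s.re) :
    ∑' m, totientGcdSummand N s m
      = (∏ p ∈ N.primeFactors, ((p : ℂ) ^ s + p) / ((p : ℂ) ^ s + 1))
        * riemannZeta (2 * s - 1) * (riemannZeta (2 * s))⁻¹ := by
  have h2s : 1 < (2 * s).re := by simp; linarith
  have h2s1 : 1 < (2 * s - 1).re := by simp; linarith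
  have hEuler := EulerProduct.eulerProduct_hasProd (f := totientGcdSummand N s)
    totientGcdSummand_one totientGcdSummand_mul (summable_norm_totientGcdSummand hN.ne_zero hs)
    totientGcdSummand_zero
  rw [funext fun p : Nat.Primes ↦ tsum_totientGcdSummand_prime_pow_eq hN p.prop hs] at hEuler
  have hfin := hasProd_primes_ite_dvd hN.ne_zero fun p : ℕ ↦ ((p : ℂ) ^ s + p) / ((p : ℂ) ^ s + 1)
  have hζ₁ := riemannZeta_eulerProduct_hasProd h2s1
  have hζ₂ := (riemannZeta_eulerProduct_hasProd h2s).inv₀ (riemannZeta_ne_zero_of_one_lt_re h2s)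
  simp only [inv_inv] at hζ₂
  exact hEuler.unique ((hfin.mul hζ₁).mul hζ₂)

end TotientGcdSummand

open Complex Finset in
theorem H_N_eval_general (N : ℕ) (hN : Squarefree N) (s : ℂ) (hs : 1 < s.re) :
    ∑ v ∈ N.divisors, ∑' n : ℕ,
        (if n ≠ 0 ∧ Nat.gcd n v = 1 then
          (Nat.totient ((N / v) * n) : ℂ)
            / (((N / v : ℕ) : ℂ) * (Real.sqrt v : ℂ) * (n : ℂ)) ^ (2 * s)
        else 0)
      = riemannZeta (2 * s - 1) / riemannZeta (2 * s) * (N : ℂ) ^ (-s)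
          * ∏ p ∈ N.primeFactors, ((p : ℂ) ^ s + p) / ((p : ℂ) ^ s + 1) := by
  rw [sum_congr rfl fun v hv ↦
      tsum_coprime_eq_tsum_gcd_eq (Nat.div_mul_cancel (Nat.dvd_of_mem_divisors hv)) hN.ne_zero,
    sum_divisors_tsum_ite_gcd_eq hN.ne_zero
      ((summable_norm_totientGcdSummand hN.ne_zero hs).of_norm.mul_right _),
    tsum_mul_right, tsum_totientGcdSummand hN hs]
  ring

open Complex Finset in
/-- Evaluation of the Dirichlet series part `H_N(s)` of the scattering determinant for
`Γ₀(N)⁺`, `N` square-free, `Re s > 1`. -/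
theorem H_N_eval (N : ℕ) (hN : Squarefree N) (hN1 : 1 < N) (s : ℂ) (hs : 1 < s.re) :
    ∑ v ∈ N.divisors, ∑' n : ℕ,
        (if n ≠ 0 ∧ Nat.gcd n v = 1 then
          (Nat.totient ((N / v) * n) : ℂ)
            / (((N / v : ℕ) : ℂ) * (Real.sqrt v : ℂ) * (n : ℂ)) ^ (2 * s)
        else 0)
      = riemannZeta (2 * s - 1) / riemannZeta (2 * s) * (N : ℂ) ^ (-s)
          * ∏ p ∈ N.primeFactors, ((p : ℂ) ^ s + p) / ((p : ℂ) ^ s + 1) :=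
  H_N_eval_general N hN s hs
end

section
/- For all real T ≥ 1, Im(log Γ(1 + iT)) = −T + T·log T + π/4 + g₃(T) where |g₃(T)| ≤ 49/(45·T); in particular Im(log Γ(1+iT)) = T·log T − T + π/4 + O(1/T). -/
/-!
Euler's limit `Γ(s) = lim nˢ n! / ∏_{j ≤ n} (s + j)` provides, for `T ≥ 0`, an explicit continuous
logarithm of `Γ(1 + iT)` whose imaginary part is the limit of
`T log n - ∑_{j ≤ n} arctan (T / (j + 1))`. Comparing this sum with `∫ arctan (T / x) dx` by the
trapezoidal rule (for the convex integrand the error on `[a, a + 1]` lies between `0` and half the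
increment of its derivative, which telescopes) gives the closed form
`-T + (T / 2) log (1 + T²) + (arctan T) / 2 - R(T)` with `0 ≤ R(T) ≤ 1 / (2T)`.
Since `exp` is a covering map, the continuous logarithm `L` with `L 0 = 0` agrees with it on
`[0, T]`, and expanding `log (1 + T²)` and `arctan T` for large `T` bounds the error by `1 / T`.
-/

open Real Set Filter Topology MeasureTheory

section Trapezoid

variable {f f' F : ℝ → ℝ} {a b : ℝ}

theorem trapezoid_error_eq_integral (hf : ∀ x ∈ uIcc a b, HasDerivAt f (f' x) x)
    (hF : ∀ x ∈ uIcc a b, HasDerivAt F (f x) x) (hf' : IntervalIntegrable f' volume a b) :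
    (b - a) * (f a + f b) / 2 - (F b - F a) = ∫ x in a..b, (x - (a + b) / 2) * f' x := by
  have hG : ∀ x ∈ uIcc a b,
      HasDerivAt (fun x => (x - (a + b) / 2) * f x - F x) ((x - (a + b) / 2) * f' x) x := by
    intro x hx
    refine ((((hasDerivAt_id x).sub_const ((a + b) / 2)).mul (hf x hx)).sub
      (hF x hx)).congr_deriv ?_
    simp only [id]
    ring
  rw [intervalIntegral.integral_eq_sub_of_hasDerivAt hG (hf'.continuousOn_mul (by fun_prop))]
  ring

theorem mul_sub_midpoint_mem_Icc (hf' : MonotoneOn f' (Icc a b)) {x : ℝ} (hx : x ∈ Icc a b) :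
    (x - (a + b) / 2) * (f' x - f' ((a + b) / 2)) ∈ Icc 0 ((b - a) / 2 * (f' b - f' a)) := by
  have hab : a ≤ b := hx.1.trans hx.2
  have ha : a ∈ Icc a b := left_mem_Icc.2 hab
  have hb : b ∈ Icc a b := right_mem_Icc.2 hab
  have hm : (a + b) / 2 ∈ Icc a b := ⟨by linarith, by linarith⟩
  have hfa := hf' ha hx hx.1
  have hfb := hf' hx hb hx.2
  have hma := hf' ha hm hm.1
  have hmb := hf' hm hb hm.2
  rcases le_total x ((a + b) / 2) with hxm | hxm
  · have hfxm := hf' hx hm hxm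
    have := mul_le_mul (by linarith [hx.1] : (a + b) / 2 - x ≤ (b - a) / 2)
      (by linarith : f' ((a + b) / 2) - f' x ≤ f' b - f' a) (by linarith) (by linarith)
    constructor <;> nlinarith
  · have hfxm := hf' hm hx hxm
    have := mul_le_mul (by linarith [hx.2] : x - (a + b) / 2 ≤ (b - a) / 2)
      (by linarith : f' x - f' ((a + b) / 2) ≤ f' b - f' a) (by linarith) (by linarith)
    constructor <;> nlinarith

theorem integral_mul_sub_midpoint_mem_Icc (hf' : MonotoneOn f' (Icc a b)) (hab : a ≤ b) :
    ∫ x in a..b, (x - (a + b) / 2) * f' x ∈ Icc 0 ((b - a) ^ 2 * (f' b - f' a) / 2) := by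
  have hint : IntervalIntegrable f' volume a b := by
    apply MonotoneOn.intervalIntegrable; rwa [uIcc_of_le hab]
  have hcenter : ∫ x in a..b, (x - (a + b) / 2) * f' ((a + b) / 2) = 0 := by
    rw [intervalIntegral.integral_mul_const, intervalIntegral.integral_sub
      intervalIntegral.intervalIntegrable_id intervalIntegrable_const, integral_id,
      intervalIntegral.integral_const]
    simp only [smul_eq_mul]
    ring
  have hshift : ∫ x in a..b, (x - (a + b) / 2) * f' x
      = ∫ x in a..b, (x - (a + b) / 2) * (f' x - f' ((a + b) / 2)) := by
    simp_rw [mul_sub]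
    rw [intervalIntegral.integral_sub (hint.continuousOn_mul (by fun_prop))
      (continuous_const.intervalIntegrable _ _ |>.continuousOn_mul (by fun_prop)),
      hcenter, sub_zero]
  have hint' : IntervalIntegrable (fun x => (x - (a + b) / 2) * (f' x - f' ((a + b) / 2)))
      volume a b := (hint.sub intervalIntegrable_const).continuousOn_mul (by fun_prop)
  rw [hshift]
  constructor
  · exact intervalIntegral.integral_nonneg hab fun x hx => (mul_sub_midpoint_mem_Icc hf' hx).1
  · calc _ ≤ ∫ _ in a..b, (b - a) / 2 * (f' b - f' a) :=
          intervalIntegral.integral_mono_on hab hint' intervalIntegrable_const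
            fun x hx => (mul_sub_midpoint_mem_Icc hf' hx).2
      _ = _ := by simp; ring

end Trapezoid

section ArctanDiv

variable {T x : ℝ}

theorem hasDerivAt_arctan_div (T : ℝ) (hx : x ≠ 0) :
    HasDerivAt (fun x => arctan (T / x)) (-T / (x ^ 2 + T ^ 2)) x := by
  have hx2 : x ^ 2 + T ^ 2 ≠ 0 := by positivity
  refine ((hasDerivAt_arctan (T / x)).comp x ((hasDerivAt_inv hx).const_mul T)).congr_deriv ?_
  field_simp

noncomputable def arctanDivPrimitive (T x : ℝ) : ℝ :=
  x * arctan (T / x) + T / 2 * log (x ^ 2 + T ^ 2)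

theorem hasDerivAt_arctanDivPrimitive (T : ℝ) (hx : x ≠ 0) :
    HasDerivAt (arctanDivPrimitive T) (arctan (T / x)) x := by
  have hx2 : x ^ 2 + T ^ 2 ≠ 0 := by positivity
  have hlog := ((hasDerivAt_pow 2 x).add_const (T ^ 2)).log hx2
  refine (((hasDerivAt_id x).mul (hasDerivAt_arctan_div T hx)).add
    (hlog.const_mul (T / 2))).congr_deriv ?_
  simp only [id]
  field_simp
  ring

theorem monotoneOn_neg_div_sq_add_sq (hT : 0 ≤ T) :
    MonotoneOn (fun x => -T / (x ^ 2 + T ^ 2)) (Ici 0) := by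
  intro x hx y hy hxy
  rcases hT.eq_or_lt with rfl | hT
  · simp
  simp only [neg_div, neg_le_neg_iff]
  gcongr

end ArctanDiv

noncomputable def arctanTrapezoidDefect (T a : ℝ) : ℝ :=
  (arctan (T / a) + arctan (T / (a + 1))) / 2
    - (arctanDivPrimitive T (a + 1) - arctanDivPrimitive T a)

theorem arctanTrapezoidDefect_mem_Icc {T a : ℝ} (hT : 0 ≤ T) (ha : 0 < a) :
    arctanTrapezoidDefect T a ∈ Icc 0 ((T / (a ^ 2 + T ^ 2) - T / ((a + 1) ^ 2 + T ^ 2)) / 2) := by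
  have hpos : ∀ x ∈ uIcc a (a + 1), x ≠ 0 := fun x hx =>
    (ha.trans_le (by simpa [uIcc_of_le (by linarith : a ≤ a + 1)] using hx.1)).ne'
  have hmono : MonotoneOn (fun x => -T / (x ^ 2 + T ^ 2)) (Icc a (a + 1)) :=
    (monotoneOn_neg_div_sq_add_sq hT).mono fun x hx => ha.le.trans hx.1
  have key := trapezoid_error_eq_integral (fun x hx => hasDerivAt_arctan_div T (hpos x hx))
    (fun x hx => hasDerivAt_arctanDivPrimitive T (hpos x hx))
    (MonotoneOn.intervalIntegrable (by rwa [uIcc_of_le (by linarith)]))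
  have hbound := integral_mul_sub_midpoint_mem_Icc hmono (by linarith)
  rw [← key, add_sub_cancel_left, one_mul, one_pow, one_mul] at hbound
  convert hbound using 3
  · ring
  · rfl

theorem arctanTrapezoidDefect_le {T a : ℝ} (hT : 0 ≤ T) (ha : 0 < a) :
    arctanTrapezoidDefect T a ≤ T / (2 * a ^ 2) := by
  have h := (arctanTrapezoidDefect_mem_Icc hT ha).2
  have h1 : 0 ≤ T / ((a + 1) ^ 2 + T ^ 2) := by positivity
  have h2 : T / (a ^ 2 + T ^ 2) ≤ T / a ^ 2 := by gcongr; nlinarith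
  rw [mul_comm, ← div_div]
  linarith

theorem continuous_arctanTrapezoidDefect {a : ℝ} (ha : 0 < a) :
    Continuous fun T => arctanTrapezoidDefect T a := by
  have hlog : ∀ x : ℝ, 0 < x → Continuous fun T : ℝ => log (x ^ 2 + T ^ 2) := fun x hx =>
    (by fun_prop : Continuous fun T : ℝ => x ^ 2 + T ^ 2).log fun T => by positivity
  have hloga := hlog a ha
  have hlogb := hlog (a + 1) (by linarith)
  unfold arctanTrapezoidDefect arctanDivPrimitive
  fun_prop

theorem sum_range_arctanTrapezoidDefect (T : ℝ) (n : ℕ) :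
    ∑ k ∈ Finset.range n, arctanTrapezoidDefect T (k + 1)
      = ∑ j ∈ Finset.range (n + 1), arctan (T / (j + 1))
        - (arctan T + arctan (T / (n + 1))) / 2
        - (arctanDivPrimitive T (n + 1) - arctanDivPrimitive T 1) := by
  induction n with
  | zero => simp
  | succ n ih =>
    rw [Finset.sum_range_succ, ih, Finset.sum_range_succ _ (n + 1), arctanTrapezoidDefect]
    push_cast
    ring

theorem summable_div_two_mul_add_one_sq (c : ℝ) :
    Summable fun k : ℕ => c / (2 * ((k : ℝ) + 1) ^ 2) :=
  (((summable_nat_add_iff 1).2 (Real.summable_one_div_nat_pow.2 one_lt_two)).mul_left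
    (c / 2)).congr fun k => by push_cast; field_simp

theorem summable_arctanTrapezoidDefect {T : ℝ} (hT : 0 ≤ T) :
    Summable fun k : ℕ => arctanTrapezoidDefect T (k + 1) :=
  .of_nonneg_of_le (fun k => (arctanTrapezoidDefect_mem_Icc hT k.cast_add_one_pos).1)
    (fun k => arctanTrapezoidDefect_le hT k.cast_add_one_pos) (summable_div_two_mul_add_one_sq T)

noncomputable def arctanTrapezoidRemainder (T : ℝ) : ℝ :=
  ∑' k : ℕ, arctanTrapezoidDefect T (k + 1)

theorem arctanTrapezoidRemainder_mem_Icc {T : ℝ} (hT : 0 < T) :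
    arctanTrapezoidRemainder T ∈ Icc 0 (1 / (2 * T)) := by
  set g : ℕ → ℝ := fun k => T / ((k + 1) ^ 2 + T ^ 2)
  have hdefect := fun k : ℕ => arctanTrapezoidDefect_mem_Icc hT.le k.cast_add_one_pos
  refine ⟨tsum_nonneg fun k => (hdefect k).1, Real.tsum_le_of_sum_range_le
    (fun k => (hdefect k).1) fun n => ?_⟩
  calc ∑ k ∈ Finset.range n, arctanTrapezoidDefect T (k + 1)
      ≤ ∑ k ∈ Finset.range n, (g k - g (k + 1)) / 2 :=
        Finset.sum_le_sum fun k _ => by simpa [g, add_assoc, one_add_one_eq_two] using (hdefect k).2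
    _ = (g 0 - g n) / 2 := by rw [← Finset.sum_div, Finset.sum_range_sub']
    _ ≤ g 0 / 2 := by linarith [show 0 ≤ g n by positivity]
    _ ≤ 1 / (2 * T) := by
        simp only [g, Nat.cast_zero, zero_add, one_pow]
        rw [div_div, div_le_div_iff₀ (by positivity) (by positivity)]
        nlinarith

theorem continuousOn_arctanTrapezoidRemainder (B : ℝ) :
    ContinuousOn arctanTrapezoidRemainder (Icc 0 B) := by
  refine continuousOn_tsum
    (fun k => (continuous_arctanTrapezoidDefect k.cast_add_one_pos).continuousOn)
    (summable_div_two_mul_add_one_sq B) fun k T hT => ?_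
  have hdefect := arctanTrapezoidDefect_mem_Icc hT.1 k.cast_add_one_pos
  rw [Real.norm_of_nonneg hdefect.1]
  calc _ ≤ T / (2 * ((k : ℝ) + 1) ^ 2) := arctanTrapezoidDefect_le hT.1 k.cast_add_one_pos
    _ ≤ B / (2 * ((k : ℝ) + 1) ^ 2) := by gcongr; exact hT.2

theorem tendsto_mul_arctan_div_atTop (T : ℝ) :
    Tendsto (fun x : ℝ => x * arctan (T / x)) atTop (𝓝 T) := by
  rcases eq_or_ne T 0 with rfl | hT
  · simp
  have hslope : Tendsto (fun t : ℝ => t⁻¹ * arctan t) (𝓝[≠] 0) (𝓝 1) := by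
    simpa using hasDerivAt_iff_tendsto_slope_zero.1 (hasDerivAt_arctan 0)
  have hdiv : Tendsto (fun x : ℝ => T / x) atTop (𝓝[≠] 0) :=
    tendsto_nhdsWithin_of_tendsto_nhds_of_eventually_within _
      (tendsto_const_nhds.div_atTop tendsto_id)
      ((eventually_gt_atTop 0).mono fun x hx => div_ne_zero hT hx.ne')
  have h := (hslope.comp hdiv).const_mul T
  rw [mul_one] at h
  refine h.congr' ?_
  filter_upwards [eventually_gt_atTop 0] with x hx
  simp only [Function.comp_apply]
  field_simp

theorem tendsto_mul_log_sub_mul_log_add_one_sq_add_sq (T : ℝ) :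
    Tendsto (fun x : ℝ => T * log x - T / 2 * log ((x + 1) ^ 2 + T ^ 2)) atTop (𝓝 0) := by
  have hinv := tendsto_inv_atTop_zero (𝕜 := ℝ)
  have hratio : Tendsto (fun x : ℝ => (1 + x⁻¹) ^ 2 + T ^ 2 * (x⁻¹) ^ 2) atTop (𝓝 1) := by
    simpa using ((hinv.const_add 1).pow 2).add ((hinv.pow 2).const_mul (T ^ 2))
  have hlog := ((continuousAt_log one_ne_zero).tendsto.comp hratio).const_mul (-(T / 2))
  rw [log_one, mul_zero] at hlog
  refine hlog.congr' ?_
  filter_upwards [eventually_gt_atTop 0] with x hx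
  have hsplit : (x + 1) ^ 2 + T ^ 2 = x ^ 2 * ((1 + x⁻¹) ^ 2 + T ^ 2 * (x⁻¹) ^ 2) := by
    field_simp
  rw [Function.comp_apply, hsplit, log_mul (by positivity) (by positivity), log_pow]
  push_cast
  ring

theorem Complex.arg_eq_arctan_of_re_pos {z : ℂ} (hz : 0 < z.re) :
    z.arg = Real.arctan (z.im / z.re) := by
  have h := abs_arg_lt_pi_div_two_iff.2 (Or.inl hz)
  rw [← tan_arg, Real.arctan_tan (neg_lt_of_abs_lt h) (lt_of_abs_lt h)]

theorem Complex.tendsto_of_tendsto_exp_of_tendsto_im {α : Type*} {l : Filter α} {u : α → ℂ}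
    {w : ℂ} {θ : ℝ} (hw : w ≠ 0) (hexp : Tendsto (fun n => exp (u n)) l (𝓝 w))
    (him : Tendsto (fun n => (u n).im) l (𝓝 θ)) :
    Tendsto u l (𝓝 (Real.log ‖w‖ + θ * I)) := by
  have hre : Tendsto (fun n => (u n).re) l (𝓝 (Real.log ‖w‖)) := by
    simpa [Function.comp_def, norm_exp] using
      (Real.continuousAt_log (norm_ne_zero_iff.2 hw)).tendsto.comp hexp.norm
  have h := ((continuous_ofReal.tendsto _).comp hre).add
    (((continuous_ofReal.tendsto _).comp him).mul_const I)
  simpa [Function.comp_def, re_add_im] using h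

noncomputable def Complex.logGammaSeq (s : ℂ) (n : ℕ) : ℂ :=
  s * log n + log n.factorial - ∑ j ∈ Finset.range (n + 1), log (s + j)

theorem Complex.exp_logGammaSeq {s : ℂ} (hs : ∀ m : ℕ, s ≠ -m) {n : ℕ} (hn : n ≠ 0) :
    exp (logGammaSeq s n) = GammaSeq s n := by
  rw [logGammaSeq, exp_sub, exp_add, exp_sum, GammaSeq, cpow_def_of_ne_zero (Nat.cast_ne_zero.2 hn),
    mul_comm s, exp_log (Nat.cast_ne_zero.2 n.factorial_ne_zero)]
  congr 1
  exact Finset.prod_congr rfl fun j _ => exp_log fun h => hs j (eq_neg_of_add_eq_zero_left h)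

theorem one_add_I_mul_ne_neg_natCast (T : ℝ) (m : ℕ) : 1 + Complex.I * T ≠ -m := by
  intro h
  have := congrArg Complex.re h
  simp at this
  linarith [(m.cast_nonneg : (0 : ℝ) ≤ m)]

theorem im_logGammaSeq_one_add_I_mul (T : ℝ) (n : ℕ) :
    (Complex.logGammaSeq (1 + Complex.I * T) n).im
      = T * log n - ∑ j ∈ Finset.range (n + 1), arctan (T / (j + 1)) := by
  have harg : ∀ j : ℕ, (Complex.log (1 + Complex.I * T + j)).im = arctan (T / (j + 1)) :=
    fun j => by
      rw [Complex.log_im, Complex.arg_eq_arctan_of_re_pos (by simp; positivity)]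
      simp [add_comm]
  simp only [Complex.logGammaSeq, Complex.sub_im, Complex.im_sum, harg]
  simp [← Complex.natCast_log]

noncomputable def imLogGammaOneAddI (T : ℝ) : ℝ :=
  -T + T / 2 * log (1 + T ^ 2) + arctan T / 2 - arctanTrapezoidRemainder T

theorem tendsto_im_logGammaSeq_one_add_I_mul {T : ℝ} (hT : 0 ≤ T) :
    Tendsto (fun n => (Complex.logGammaSeq (1 + Complex.I * T) n).im) atTop
      (𝓝 (imLogGammaOneAddI T)) := by
  have hx : Tendsto (fun n : ℕ => (n : ℝ) + 1) atTop atTop :=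
    tendsto_natCast_atTop_atTop.atTop_add tendsto_const_nhds
  have hlog := (tendsto_mul_log_sub_mul_log_add_one_sq_add_sq T).comp tendsto_natCast_atTop_atTop
  have harctan := (tendsto_mul_arctan_div_atTop T).comp hx
  have htail : Tendsto (fun n : ℕ => arctan (T / (n + 1))) atTop (𝓝 0) := by
    simpa [Function.comp_def] using
      (continuous_arctan.tendsto 0).comp (tendsto_const_nhds.div_atTop hx)
  have hsum := (summable_arctanTrapezoidDefect hT).hasSum.tendsto_sum_nat
  have h := (((hlog.sub harctan).sub (htail.div_const 2)).sub hsum).add_const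
    (arctan T / 2 + T / 2 * log (1 + T ^ 2))
  convert h using 2 with n
  · rw [im_logGammaSeq_one_add_I_mul, sum_range_arctanTrapezoidDefect]
    simp only [Function.comp_apply, arctanDivPrimitive, div_one, one_pow]
    ring
  · rw [imLogGammaOneAddI, arctanTrapezoidRemainder]
    ring

noncomputable def logGammaOneAddI (T : ℝ) : ℂ :=
  Real.log ‖Complex.Gamma (1 + Complex.I * T)‖ + imLogGammaOneAddI T * Complex.I

theorem logGammaOneAddI_zero : logGammaOneAddI 0 = 0 := by
  simp [logGammaOneAddI, imLogGammaOneAddI, arctanTrapezoidRemainder, arctanTrapezoidDefect,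
    arctanDivPrimitive]

theorem im_logGammaOneAddI (T : ℝ) : (logGammaOneAddI T).im = imLogGammaOneAddI T := by
  simp [logGammaOneAddI]

theorem exp_logGammaOneAddI {T : ℝ} (hT : 0 ≤ T) :
    Complex.exp (logGammaOneAddI T) = Complex.Gamma (1 + Complex.I * T) := by
  have hs := one_add_I_mul_ne_neg_natCast T
  have hGamma : Tendsto (fun n => Complex.exp (Complex.logGammaSeq (1 + Complex.I * T) n)) atTop
      (𝓝 (Complex.Gamma (1 + Complex.I * T))) :=
    (Complex.GammaSeq_tendsto_Gamma _).congr' <|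
      (eventually_ne_atTop 0).mono fun n hn => (Complex.exp_logGammaSeq hs hn).symm
  have hlim := Complex.tendsto_of_tendsto_exp_of_tendsto_im (Complex.Gamma_ne_zero hs) hGamma
    (tendsto_im_logGammaSeq_one_add_I_mul hT)
  exact tendsto_nhds_unique ((Complex.continuous_exp.tendsto _).comp hlim) hGamma

theorem continuousOn_logGammaOneAddI (B : ℝ) : ContinuousOn logGammaOneAddI (Icc 0 B) := by
  have hs := one_add_I_mul_ne_neg_natCast
  have hGamma : Continuous fun T : ℝ => Complex.Gamma (1 + Complex.I * T) :=
    continuous_iff_continuousAt.2 fun T =>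
      (Complex.differentiableAt_Gamma _ (hs T)).continuousAt.comp
        (f := fun T : ℝ => 1 + Complex.I * T) (by fun_prop)
  have hlogNorm : Continuous fun T : ℝ => Real.log ‖Complex.Gamma (1 + Complex.I * T)‖ :=
    hGamma.norm.log fun T => norm_ne_zero_iff.2 (Complex.Gamma_ne_zero (hs T))
  have hlog : Continuous fun T : ℝ => log (1 + T ^ 2) :=
    (by fun_prop : Continuous fun T : ℝ => 1 + T ^ 2).log fun T => by positivity
  have him : ContinuousOn imLogGammaOneAddI (Icc 0 B) :=
    (by fun_prop : Continuous fun T => -T + T / 2 * log (1 + T ^ 2) + arctan T / 2).continuousOn.sub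
      (continuousOn_arctanTrapezoidRemainder B)
  exact (Complex.continuous_ofReal.comp hlogNorm).continuousOn.add
    ((Complex.continuous_ofReal.comp_continuousOn him).mul continuousOn_const)

theorem abs_imLogGammaOneAddI_sub_le {T : ℝ} (hT : 0 < T) :
    |imLogGammaOneAddI T - (-T + T * log T + π / 4)| ≤ 1 / T := by
  have hsplit : imLogGammaOneAddI T - (-T + T * log T + π / 4)
      = T / 2 * log (1 + (T ^ 2)⁻¹) - arctan T⁻¹ / 2 - arctanTrapezoidRemainder T := by
    have h : 1 + T ^ 2 = T ^ 2 * (1 + (T ^ 2)⁻¹) := by field_simp; ring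
    rw [imLogGammaOneAddI, h, log_mul (by positivity) (by positivity), log_pow,
      arctan_inv_of_pos hT]
    push_cast
    ring
  have hlog : T / 2 * log (1 + (T ^ 2)⁻¹) ∈ Icc 0 (1 / (2 * T)) := by
    refine ⟨mul_nonneg (by positivity) (log_nonneg (le_add_of_nonneg_right (by positivity))), ?_⟩
    calc T / 2 * log (1 + (T ^ 2)⁻¹) ≤ T / 2 * (T ^ 2)⁻¹ := by
          gcongr; linarith [log_le_sub_one_of_pos (by positivity : 0 < 1 + (T ^ 2)⁻¹)]
      _ = 1 / (2 * T) := by field_simp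
  have harctan : arctan T⁻¹ ∈ Icc 0 (1 / T) := ⟨by positivity, by
    simpa [tan_arctan] using le_tan (by positivity : 0 ≤ arctan T⁻¹) (arctan_lt_pi_div_two _)⟩
  have hrem := arctanTrapezoidRemainder_mem_Icc hT
  have hhalf : 1 / (2 * T) + 1 / (2 * T) = 1 / T := by field_simp; ring
  rw [hsplit, abs_le]
  constructor <;> linarith [hlog.1, hlog.2, harctan.1, harctan.2, hrem.1, hrem.2]

open Complex Real in
theorem im_log_Gamma_asymptotic (L : ℝ → ℂ) (hL : Continuous L) (hL0 : L 0 = 0)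
    (hexp : ∀ T : ℝ, Complex.exp (L T) = Complex.Gamma (1 + Complex.I * T)) :
    ∀ T : ℝ, 1 ≤ T →
      |(L T).im - (-T + T * Real.log T + π / 4)| ≤ 49 / (45 * T) := by
  intro T hT
  have hT0 : 0 < T := by linarith
  have hLT : L T = logGammaOneAddI T :=
    isCoveringMap_exp.eqOn_of_comp_eqOn isPreconnected_Icc hL.continuousOn
      (continuousOn_logGammaOneAddI T)
      (fun x hx => Subtype.ext <| (hexp x).trans (exp_logGammaOneAddI hx.1).symm)
      (left_mem_Icc.2 hT0.le) (hL0.trans logGammaOneAddI_zero.symm) (right_mem_Icc.2 hT0.le)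
  rw [hLT, im_logGammaOneAddI]
  calc _ ≤ 1 / T := abs_imLogGammaOneAddI_sub_le hT0
    _ ≤ 49 / (45 * T) := by rw [div_le_div_iff₀ hT0 (by positivity)]; linarith
end
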